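/- arXiv:1508.02182 — 3 statements merged into one kernel-verified Lean document; each statement's English description precedes it below -/
import Mathlib

section
/- The entropy function f(x) = ∑ᵢ xᵢ ln xᵢ is 1-strongly convex with respect to the 1-norm on the unit simplex: for all x, y in the simplex, f(y) ≥ f(x) + ⟨∇f(x), y − x⟩ + (1/2)‖y − x‖₁², where the inequality is interpreted on the relative interior of the simplex. -/
/-!
The Bregman divergence of the entropy is the Kullback–Leibler divergence `∑ yᵢ log (yᵢ / xᵢ)`,
so the claim is Pinsker's inequality. Pointwise, `klFun t = t log t - t + 1` dominates
`3 (t - 1)² / (2 (t + 2))`: their difference vanishes with its derivative at `t = 1`, and that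
derivative is increasing because `1 / t - 27 / (t + 2)³ ≥ 0`. Homogenising (`t = a / b`) and
applying Cauchy–Schwarz with the weights `yᵢ + 2 xᵢ`, whose total is `3`, gives
`(∑ |yᵢ - xᵢ|)² ≤ 2 KL(y ‖ x)`.
-/

open Real Finset InformationTheory

lemma hasDerivAt_three_mul_sq_sub_one_div {t : ℝ} (ht : t + 2 ≠ 0) :
    HasDerivAt (fun s : ℝ => 3 * (s - 1) ^ 2 / (2 * (s + 2)))
      (3 * (t - 1) * (t + 5) / (2 * (t + 2) ^ 2)) t := by
  have h := ((((hasDerivAt_id' t).sub_const 1).fun_pow 2).const_mul 3).fun_div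
    (((hasDerivAt_id' t).add_const 2).const_mul 2) (by simpa using ht)
  refine h.congr_deriv ?_
  field_simp
  ring

lemma hasDerivAt_three_mul_sub_one_mul_div {t : ℝ} (ht : t + 2 ≠ 0) :
    HasDerivAt (fun s : ℝ => 3 * (s - 1) * (s + 5) / (2 * (s + 2) ^ 2))
      (27 / (t + 2) ^ 3) t := by
  have h := ((((hasDerivAt_id' t).sub_const 1).const_mul 3).fun_mul
    ((hasDerivAt_id' t).add_const 5)).fun_div
    ((((hasDerivAt_id' t).add_const 2).fun_pow 2).const_mul 2) (by simpa using ht)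
  refine h.congr_deriv ?_
  field_simp
  ring

lemma monotoneOn_log_sub_three_mul_sub_one_mul_div :
    MonotoneOn (fun t : ℝ => log t - 3 * (t - 1) * (t + 5) / (2 * (t + 2) ^ 2)) (Set.Ioi 0) := by
  have hderiv : ∀ t ∈ Set.Ioi (0 : ℝ), HasDerivAt
      (fun t : ℝ => log t - 3 * (t - 1) * (t + 5) / (2 * (t + 2) ^ 2))
      (t⁻¹ - 27 / (t + 2) ^ 3) t := fun t ht =>
    (hasDerivAt_log ht.out.ne').sub (hasDerivAt_three_mul_sub_one_mul_div (by linarith [ht.out]))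
  refine monotoneOn_of_hasDerivWithinAt_nonneg (convex_Ioi 0)
    (fun t ht => (hderiv t ht).continuousAt.continuousWithinAt)
    (fun t ht => (hderiv t (interior_subset ht)).hasDerivWithinAt) fun t ht => ?_
  rw [interior_Ioi] at ht
  have ht : 0 < t := ht
  -- `(t + 2)³ - 27 t = (t - 1)² (t + 8)`
  rw [sub_nonneg, inv_eq_one_div, div_le_div_iff₀ (by positivity) ht]
  nlinarith [mul_nonneg (sq_nonneg (t - 1)) (by linarith : (0 : ℝ) ≤ t + 8)]

lemma three_mul_sq_sub_one_div_le_klFun {t : ℝ} (ht : 0 < t) :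
    3 * (t - 1) ^ 2 / (2 * (t + 2)) ≤ klFun t := by
  set φ : ℝ → ℝ := fun t => klFun t - 3 * (t - 1) ^ 2 / (2 * (t + 2))
  have hderiv : ∀ t ∈ Set.Ioi (0 : ℝ), HasDerivAt φ
      (log t - 3 * (t - 1) * (t + 5) / (2 * (t + 2) ^ 2)) t := fun t ht =>
    (hasDerivAt_klFun ht.out.ne').sub (hasDerivAt_three_mul_sq_sub_one_div (by linarith [ht.out]))
  have hdiff : DifferentiableOn ℝ φ (Set.Ioi 0) := fun t ht =>
    (hderiv t ht).differentiableAt.differentiableWithinAt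
  have one_mem : (1 : ℝ) ∈ Set.Ioi 0 := Set.mem_Ioi.2 one_pos
  have hmin : IsMinOn φ (Set.Ioi 0) 1 := by
    refine isMinOn_Ioi_of_deriv (hderiv 1 one_mem).continuousAt
      (hdiff.mono Set.Ioo_subset_Ioi_self) (hdiff.mono (Set.Ioi_subset_Ioi zero_le_one))
      (fun t ht => ?_) fun t ht => ?_
    · rw [(hderiv t ht.1).deriv]
      simpa using monotoneOn_log_sub_three_mul_sub_one_mul_div ht.1 one_mem ht.2.le
    · have ht0 : t ∈ Set.Ioi (0 : ℝ) := Set.mem_Ioi.2 (one_pos.trans ht)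
      rw [(hderiv t ht0).deriv]
      simpa using monotoneOn_log_sub_three_mul_sub_one_mul_div one_mem ht0 ht.out.le
  have hφ_one : φ 1 = 0 := by simp [φ, klFun_one]
  have : φ 1 ≤ φ t := hmin ht
  linarith

lemma three_mul_sq_sub_div_le {a b : ℝ} (ha : 0 < a) (hb : 0 < b) :
    3 * (a - b) ^ 2 / (2 * (a + 2 * b)) ≤ a * log (a / b) - a + b := by
  have h := mul_le_mul_of_nonneg_left (three_mul_sq_sub_one_div_le_klFun (div_pos ha hb)) hb.le
  calc 3 * (a - b) ^ 2 / (2 * (a + 2 * b))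
      = b * (3 * (a / b - 1) ^ 2 / (2 * (a / b + 2))) := by field_simp
    _ ≤ b * klFun (a / b) := h
    _ = a * log (a / b) - a + b := by rw [klFun_apply]; field_simp; ring

theorem sq_sum_abs_sub_le_two_mul_sum_mul_log_div {ι : Type*} [Fintype ι] {p q : ι → ℝ}
    (hp : ∀ i, 0 < p i) (hq : ∀ i, 0 < q i) (hps : ∑ i, p i = 1) (hqs : ∑ i, q i = 1) :
    (∑ i, |p i - q i|) ^ 2 ≤ 2 * ∑ i, p i * log (p i / q i) := by
  have hpos : ∀ i ∈ univ, 0 < p i + 2 * q i := fun i _ => by linarith [hp i, hq i]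
  have hsum : ∑ i, (p i + 2 * q i) = 3 := by
    rw [sum_add_distrib, ← mul_sum, hps, hqs]; norm_num
  have titu := sq_sum_div_le_sum_sq_div univ (fun i => |p i - q i|) hpos
  simp only [hsum, sq_abs] at titu
  calc (∑ i, |p i - q i|) ^ 2
      ≤ 2 * ∑ i, 3 * (p i - q i) ^ 2 / (2 * (p i + 2 * q i)) := by
        have : ∀ i ∈ univ, 2 * (3 * (p i - q i) ^ 2 / (2 * (p i + 2 * q i)))
            = 3 * ((p i - q i) ^ 2 / (p i + 2 * q i)) := fun i _ => by field_simp
        rw [mul_sum, sum_congr rfl this, ← mul_sum]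
        linarith
    _ ≤ 2 * ∑ i, (p i * log (p i / q i) - p i + q i) := by
        gcongr with i
        exact three_mul_sq_sub_div_le (hp i) (hq i)
    _ = 2 * ∑ i, p i * log (p i / q i) := by
        rw [sum_add_distrib, sum_sub_distrib, hps, hqs]; ring

/-- The entropy `f(x) = ∑ xᵢ ln xᵢ` is 1-strongly convex w.r.t. the 1-norm on the
(relative interior of the) unit simplex. -/
theorem stmt_10 (n : ℕ) (x y : Fin n → ℝ)
    (hx : ∀ i, 0 < x i) (hxs : ∑ i, x i = 1)
    (hy : ∀ i, 0 < y i) (hys : ∑ i, y i = 1) :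
    (∑ i, x i * Real.log (x i)) + (∑ i, (Real.log (x i) + 1) * (y i - x i)) +
      (1 / 2) * (∑ i, |y i - x i|) ^ 2 ≤ ∑ i, y i * Real.log (y i) := by
  have bregman_eq_kl : ∑ i, y i * log (y i) - ((∑ i, x i * log (x i)) +
      ∑ i, (log (x i) + 1) * (y i - x i)) = ∑ i, y i * log (y i / x i) := by
    have : ∀ i ∈ univ, y i * log (y i / x i) = y i * log (y i) - (x i * log (x i) +
        (log (x i) + 1) * (y i - x i)) + (y i - x i) := fun i _ => by
      rw [log_div (hy i).ne' (hx i).ne']; ring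
    rw [sum_congr rfl this, sum_add_distrib, sum_sub_distrib, sum_sub_distrib, hxs, hys,
      ← sum_add_distrib]
    ring
  have pinsker := sq_sum_abs_sub_le_two_mul_sum_mul_log_div hy hx hys hxs
  linarith
end

section
/- The log-sum-exp function φ(y) = ln(∑ᵢ exp(yᵢ)) on ℝⁿ has gradient with Lipschitz constant 1 with respect to the Euclidean norm: ‖∇φ(y₁) − ∇φ(y₂)‖₂ ≤ ‖y₁ − y₂‖₂ for all y₁, y₂. -/
/-! The gradient of log-sum-exp is the softmax map `p`, whose Jacobian `diag p - p pᵀ` sends `v`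
to `(pᵢ (vᵢ - m))ᵢ` with `m = ∑ pₖ vₖ`. As `0 ≤ pᵢ ≤ 1` and `∑ pᵢ ≤ 1`,
`∑ (pᵢ (vᵢ - m))² ≤ ∑ pᵢ (vᵢ - m)² ≤ ∑ pᵢ vᵢ² ≤ ∑ vᵢ²`, the middle step being the bound of a
variance by a second moment. So the Jacobian has Euclidean operator norm at most `1`, and the mean
value inequality makes softmax `1`-Lipschitz. -/

open Real Finset

variable {ι : Type*} [Fintype ι]

noncomputable def softmax (y : ι → ℝ) : ι → ℝ :=
  fun i => exp (y i) / ∑ k, exp (y k)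

lemma softmax_nonneg (y : ι → ℝ) (i : ι) : 0 ≤ softmax y i := by
  unfold softmax; positivity

lemma sum_softmax_le_one (y : ι → ℝ) : ∑ i, softmax y i ≤ 1 := by
  simp only [softmax, ← sum_div]
  exact div_self_le_one _

noncomputable def softmaxJacobian (y : ι → ℝ) : (ι → ℝ) →L[ℝ] (ι → ℝ) :=
  ContinuousLinearMap.pi fun i =>
    softmax y i • (ContinuousLinearMap.proj i - ∑ k, softmax y k • ContinuousLinearMap.proj k)

lemma softmaxJacobian_apply (y v : ι → ℝ) (i : ι) :
    softmaxJacobian y v i = softmax y i * (v i - ∑ k, softmax y k * v k) := by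
  simp [softmaxJacobian]

theorem hasFDerivAt_softmax (y : ι → ℝ) : HasFDerivAt softmax (softmaxJacobian y) y := by
  rw [hasFDerivAt_pi']
  intro i
  have hS : ∑ k, exp (y k) ≠ 0 := (lt_of_lt_of_le (exp_pos (y i))
    (single_le_sum (fun k _ => (exp_pos (y k)).le) (mem_univ i))).ne'
  have hexp : ∀ k, HasFDerivAt (fun z : ι → ℝ => exp (z k))
      (exp (y k) • ContinuousLinearMap.proj k) y :=
    fun k => (hasFDerivAt_apply k y).exp
  have hquot := (hexp i).fun_mul
    ((hasDerivAt_inv hS).comp_hasFDerivAt y (HasFDerivAt.fun_sum fun k _ => hexp k))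
  simp only [softmax, div_eq_mul_inv]
  refine hquot.congr_fderiv ?_
  ext v
  simp only [ContinuousLinearMap.comp_apply, ContinuousLinearMap.proj_apply,
    softmaxJacobian_apply, add_apply, neg_apply, smul_apply, _root_.sum_apply, neg_smul, smul_neg,
    Function.comp_apply, smul_eq_mul, softmax, div_mul_eq_mul_div, ← sum_div]
  field_simp
  ring

lemma sum_sq_weight_mul_sub_mean_le {p : ι → ℝ} (hp : ∀ i, 0 ≤ p i) (hp1 : ∑ i, p i ≤ 1)
    (v : ι → ℝ) : ∑ i, (p i * (v i - ∑ k, p k * v k)) ^ 2 ≤ ∑ i, v i ^ 2 := by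
  set m := ∑ k, p k * v k
  have hp_le : ∀ i, p i ≤ 1 := fun i =>
    (single_le_sum (fun k _ => hp k) (mem_univ i)).trans hp1
  have hvar : ∑ i, p i * (v i - m) ^ 2 = ∑ i, p i * v i ^ 2 - (2 - ∑ i, p i) * m ^ 2 :=
    calc ∑ i, p i * (v i - m) ^ 2 = ∑ i, (p i * v i ^ 2 - 2 * m * (p i * v i) + m ^ 2 * p i) :=
          sum_congr rfl fun i _ => by ring
      _ = _ := by rw [sum_add_distrib, sum_sub_distrib, ← mul_sum, ← mul_sum]; ring
  calc ∑ i, (p i * (v i - m)) ^ 2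
      ≤ ∑ i, p i * (v i - m) ^ 2 := sum_le_sum fun i _ => by
        rw [mul_pow, sq (p i)]
        exact mul_le_mul_of_nonneg_right (mul_le_of_le_one_left (hp i) (hp_le i)) (sq_nonneg _)
    _ ≤ ∑ i, p i * v i ^ 2 := by
        rw [hvar]; nlinarith [sq_nonneg m]
    _ ≤ ∑ i, v i ^ 2 := sum_le_sum fun i _ =>
        mul_le_of_le_one_left (sq_nonneg _) (hp_le i)

theorem lipschitzWith_softmax_euclidean :
    LipschitzWith 1 (WithLp.toLp 2 ∘ softmax ∘ WithLp.ofLp : EuclideanSpace ℝ ι → _) := by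
  have hderiv := fun x : EuclideanSpace ℝ ι => (PiLp.hasFDerivAt_toLp (𝕜 := ℝ) 2 _).comp x
    ((hasFDerivAt_softmax _).comp x (PiLp.hasFDerivAt_ofLp (𝕜 := ℝ) 2 x))
  refine lipschitzWith_of_nnnorm_fderiv_le (𝕜 := ℝ) (fun x => (hderiv x).differentiableAt)
    fun x => ?_
  rw [(hderiv x).fderiv, ← NNReal.coe_le_coe, coe_nnnorm, NNReal.coe_one]
  refine ContinuousLinearMap.opNorm_le_bound _ zero_le_one fun v => ?_
  rw [one_mul, EuclideanSpace.norm_eq, EuclideanSpace.norm_eq]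
  refine sqrt_le_sqrt ?_
  simp only [Real.norm_eq_abs, sq_abs]
  change ∑ i, softmaxJacobian x.ofLp v.ofLp i ^ 2 ≤ _
  simp only [softmaxJacobian_apply]
  exact sum_sq_weight_mul_sub_mean_le (softmax_nonneg _) (sum_softmax_le_one _) _

/-- The gradient of log-sum-exp, `∇φ(y)ᵢ = exp yᵢ / ∑ exp yₖ`, is 1-Lipschitz in the
Euclidean norm. -/
theorem stmt_13 (n : ℕ) (y₁ y₂ : Fin n → ℝ) :
    Real.sqrt (∑ i, (Real.exp (y₁ i) / ∑ k, Real.exp (y₁ k) -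
        Real.exp (y₂ i) / ∑ k, Real.exp (y₂ k)) ^ 2) ≤
      Real.sqrt (∑ i, (y₁ i - y₂ i) ^ 2) := by
  have h := lipschitzWith_softmax_euclidean.dist_le_mul (WithLp.toLp 2 y₁) (WithLp.toLp 2 y₂)
  simpa [EuclideanSpace.dist_eq, Real.dist_eq, sq_abs, softmax] using h
end

section
/- Variance bound for the sum-randomization (SVRG-type) gradient estimator: let f = (1/m)∑ₖ fₖ with each fₖ convex, differentiable, with L-Lipschitz gradient, and let x* minimize f, so that ∇f(x*) = 0 (it is not assumed that each ∇fₖ(x*) = 0). For the estimator G(x, y, ξ) = ∇f_ξ(x) − ∇f_ξ(y) + ∇f(y) with ξ uniform on {1,…,m}, one has E_ξ[‖G(x,y,ξ) − ∇f(x)‖²] ≤ 2 E_ξ[‖∇f_ξ(x) − ∇f_ξ(x*)‖²] + 2 E_ξ[‖∇f_ξ(y) − ∇f_ξ(x*) − (∇f(y) − ∇f(x*))‖²] ≤ 4L·(f(x) − f(x*)) + 4L·(f(y) − f(x*)). -/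
open Real Finset RealInnerProductSpace

section aux
variable {E : Type*} [NormedAddCommGroup E] [InnerProductSpace ℝ E] [CompleteSpace E]

lemma line_hasDerivAt (f : E → ℝ) (g : E → E) (hg : ∀ p, HasGradientAt f (g p) p)
    (v u : E) (t : ℝ) :
    HasDerivAt (fun s : ℝ => f (v + s • (u - v))) (⟪g (v + t • (u - v)), u - v⟫) t := by
  have h1 : HasDerivAt (fun s : ℝ => v + s • (u - v)) (u - v) t := by
    simpa using ((hasDerivAt_id t).smul_const (u - v)).const_add v
  have h2 := (hasGradientAt_iff_hasFDerivAt.1 (hg (v + t • (u - v)))).comp_hasDerivAt t h1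
  simp at h2
  exact h2

lemma tangent_le (f : E → ℝ) (g : E → E) (hconv : ConvexOn ℝ Set.univ f)
    (hg : ∀ p, HasGradientAt f (g p) p) (v u : E) :
    f v + ⟪g v, u - v⟫ ≤ f u := by
  set h : ℝ → ℝ := fun s : ℝ => f (v + s • (u - v)) with hh
  have hc : ConvexOn ℝ Set.univ h := by
    have h0 := hconv.comp_affineMap (AffineMap.lineMap v u)
    simp only [Set.preimage_univ] at h0
    have hfun : h = f ∘ AffineMap.lineMap v u := by
      funext t
      simp only [hh, Function.comp, AffineMap.lineMap_apply_module]
      congr 1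
      module
    rw [hfun]
    exact h0
  have hd : HasDerivAt h (⟪g v, u - v⟫) 0 := by
    simpa using line_hasDerivAt f g hg v u 0
  have := hc.le_slope_of_hasDerivAt (Set.mem_univ 0) (Set.mem_univ 1) one_pos hd
  rw [slope_def_field] at this
  simp only [hh] at this
  norm_num at this
  linarith

lemma descent_le (f : E → ℝ) (g : E → E) (L : ℝ) (hL : 0 < L)
    (hg : ∀ p, HasGradientAt f (g p) p)
    (hlip : ∀ p q, ‖g p - g q‖ ≤ L * ‖p - q‖) (v u : E) :
    f u ≤ f v + ⟪g v, u - v⟫ + L / 2 * ‖u - v‖ ^ 2 := by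
  set c : ℝ → E := fun s => v + s • (u - v) with hc
  set A : ℝ := ⟪g v, u - v⟫ with hA
  set B : ℝ := L / 2 * ‖u - v‖ ^ 2 with hB
  set φ : ℝ → ℝ := fun t => f (c t) - t * A - B * t ^ 2 with hφ
  have hφd : ∀ t, HasDerivAt φ (⟪g (c t) - g v, u - v⟫ - 2 * B * t) t := by
    intro t
    have h1 := line_hasDerivAt f g hg v u t
    have h2 : HasDerivAt (fun t : ℝ => t * A) A t := by
      simpa using (hasDerivAt_id t).mul_const A
    have h3 : HasDerivAt (fun t : ℝ => B * t ^ 2) (B * (2 * t)) t := by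
      simpa using (hasDerivAt_pow 2 t).const_mul B
    have := (h1.sub h2).sub h3
    refine this.congr_deriv ?_
    rw [inner_sub_left]
    ring
  have hmono : AntitoneOn φ (Set.Icc (0:ℝ) 1) := by
    apply antitoneOn_of_deriv_nonpos (convex_Icc 0 1)
    · have : Differentiable ℝ φ := fun t => (hφd t).differentiableAt
      exact this.continuous.continuousOn
    · intro t _
      exact (hφd t).differentiableAt.differentiableWithinAt
    · intro t ht
      rw [interior_Icc] at ht
      rw [(hφd t).deriv]
      have hib : ⟪g (c t) - g v, u - v⟫ ≤ ‖g (c t) - g v‖ * ‖u - v‖ := real_inner_le_norm _ _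
      have hlb : ‖g (c t) - g v‖ ≤ L * (t * ‖u - v‖) := by
        have := hlip (c t) v
        have hcv : c t - v = t • (u - v) := by simp [hc]
        rw [hcv, norm_smul] at this
        simpa [abs_of_pos ht.1] using this
      have h1 : ⟪g (c t) - g v, u - v⟫ ≤ L * t * ‖u - v‖ ^ 2 := by
        calc ⟪g (c t) - g v, u - v⟫ ≤ ‖g (c t) - g v‖ * ‖u - v‖ := hib
        _ ≤ L * (t * ‖u - v‖) * ‖u - v‖ := by
            apply mul_le_mul_of_nonneg_right hlb (norm_nonneg _)
        _ = L * t * ‖u - v‖ ^ 2 := by ring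
      have : 2 * B * t = L * t * ‖u - v‖ ^ 2 := by rw [hB]; ring
      linarith
  have h01 := hmono (Set.mem_Icc.2 ⟨le_refl 0, zero_le_one⟩)
      (Set.mem_Icc.2 ⟨zero_le_one, le_refl 1⟩) zero_le_one
  have hc0 : c 0 = v := by simp [hc]
  have hc1 : c 1 = u := by simp [hc]
  simp only [hφ, hc0, hc1] at h01
  norm_num at h01
  linarith

lemma cocoercive (f : E → ℝ) (g : E → E) (L : ℝ) (hL : 0 < L)
    (hconv : ConvexOn ℝ Set.univ f)
    (hg : ∀ p, HasGradientAt f (g p) p)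
    (hlip : ∀ p q, ‖g p - g q‖ ≤ L * ‖p - q‖) (a b : E) :
    ‖g a - g b‖ ^ 2 ≤ 2 * L * (f a - f b - ⟪g b, a - b⟫) := by
  set w : E := a - (1 / L) • (g a - g b) with hw
  have h1 := tangent_le f g hconv hg b w
  have h2 := descent_le f g L hL hg hlip a w
  have hwa : w - a = -((1 / L) • (g a - g b)) := by rw [hw]; abel
  have hwb : w - b = (a - b) - (1 / L) • (g a - g b) := by rw [hw]; abel
  have e1 : ⟪g a, w - a⟫ = -(1 / L * ⟪g a, g a - g b⟫) := by
    rw [hwa, inner_neg_right, real_inner_smul_right]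
  have e2 : ⟪g b, w - b⟫ = ⟪g b, a - b⟫ - 1 / L * ⟪g b, g a - g b⟫ := by
    rw [hwb, inner_sub_right, real_inner_smul_right]
  have e3 : ‖w - a‖ ^ 2 = (1 / L) ^ 2 * ‖g a - g b‖ ^ 2 := by
    rw [hwa, norm_neg, norm_smul]
    rw [Real.norm_eq_abs, abs_of_pos (by positivity : (0:ℝ) < 1 / L)]
    ring
  have e4 : ⟪g a, g a - g b⟫ - ⟪g b, g a - g b⟫ = ‖g a - g b‖ ^ 2 := by
    rw [← inner_sub_left, real_inner_self_eq_norm_sq]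
  rw [e1] at h2
  rw [e2] at h1
  rw [e3] at h2
  have hL' : L ≠ 0 := ne_of_gt hL
  have key : f b + ⟪g b, a - b⟫ + 1 / (2 * L) * ‖g a - g b‖ ^ 2 ≤ f a := by
    have hP : ⟪g a, g a - g b⟫ = ⟪g b, g a - g b⟫ + ‖g a - g b‖ ^ 2 := by linarith [e4]
    rw [hP] at h2
    have expand : -(1 / L * (⟪g b, g a - g b⟫ + ‖g a - g b‖ ^ 2))
          + L / 2 * ((1 / L) ^ 2 * ‖g a - g b‖ ^ 2)
        = - (1 / L * ⟪g b, g a - g b⟫) - 1 / (2 * L) * ‖g a - g b‖ ^ 2 := by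
      field_simp
      ring
    linarith
  have h5 : 1 / (2 * L) * ‖g a - g b‖ ^ 2 ≤ f a - f b - ⟪g b, a - b⟫ := by linarith
  have h6 := mul_le_mul_of_nonneg_left h5 (by positivity : (0:ℝ) ≤ 2 * L)
  calc ‖g a - g b‖ ^ 2 = 2 * L * (1 / (2 * L) * ‖g a - g b‖ ^ 2) := by
        field_simp
    _ ≤ 2 * L * (f a - f b - ⟪g b, a - b⟫) := h6

lemma variance_le {m : ℕ} (Z : Fin m → E) (c : E) (hc : c = (m : ℝ)⁻¹ • ∑ k, Z k) (hm : 0 < m) :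
    ∑ k, ‖Z k - c‖ ^ 2 ≤ ∑ k, ‖Z k‖ ^ 2 := by
  have hm' : (m : ℝ) ≠ 0 := Nat.cast_ne_zero.2 hm.ne'
  have hsum : ∑ k, Z k = (m : ℝ) • c := by
    rw [hc, smul_smul, mul_inv_cancel₀ hm', one_smul]
  have h1 : ∑ k, ⟪Z k, c⟫ = (m : ℝ) * ‖c‖ ^ 2 := by
    rw [← sum_inner, hsum, real_inner_smul_left, real_inner_self_eq_norm_sq]
  have h2 : ∑ k, ‖Z k - c‖ ^ 2 = ∑ k, ‖Z k‖ ^ 2 - (m : ℝ) * ‖c‖ ^ 2 := by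
    have : ∀ k : Fin m, ‖Z k - c‖ ^ 2 = ‖Z k‖ ^ 2 - 2 * ⟪Z k, c⟫ + ‖c‖ ^ 2 :=
      fun k => norm_sub_sq_real _ _
    rw [Finset.sum_congr rfl (fun k _ => this k), Finset.sum_add_distrib,
      Finset.sum_sub_distrib, ← Finset.mul_sum, h1, Finset.sum_const]
    simp [Finset.card_univ, nsmul_eq_mul]
    ring
  rw [h2]
  nlinarith [sq_nonneg ‖c‖, (by exact_mod_cast hm : (0:ℝ) < m)]

lemma sq_norm_sub_le_two (a b : E) : ‖a - b‖ ^ 2 ≤ 2 * ‖a‖ ^ 2 + 2 * ‖b‖ ^ 2 := by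
  have h := norm_sub_le a b
  nlinarith [sq_nonneg (‖a‖ - ‖b‖), norm_nonneg a, norm_nonneg b, norm_nonneg (a - b)]

lemma avg_coco {m : ℕ} (hm : 0 < m) (fk : Fin m → E → ℝ) (gk : Fin m → E → E)
    (L : ℝ) (hL : 0 < L)
    (hconv : ∀ k, ConvexOn ℝ Set.univ (fk k))
    (hgrad : ∀ k p, HasGradientAt (fk k) (gk k p) p)
    (hlip : ∀ k p q, ‖gk k p - gk k q‖ ≤ L * ‖p - q‖)
    (xs : E) (hsum0 : ∑ k, gk k xs = 0) (z : E) :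
    (1 / m : ℝ) * ∑ k, ‖gk k z - gk k xs‖ ^ 2 ≤
      2 * L * ((1 / m : ℝ) * ∑ k, fk k z - (1 / m : ℝ) * ∑ k, fk k xs) := by
  have hco : ∀ k : Fin m, ‖gk k z - gk k xs‖ ^ 2 ≤
      2 * L * (fk k z - fk k xs - ⟪gk k xs, z - xs⟫) := fun k =>
    cocoercive (fk k) (gk k) L hL (hconv k) (hgrad k) (hlip k) z xs
  have hsum := Finset.sum_le_sum (fun k (_ : k ∈ Finset.univ) => hco k)
  have hrhs : ∑ k, 2 * L * (fk k z - fk k xs - ⟪gk k xs, z - xs⟫)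
      = 2 * L * (∑ k, fk k z - ∑ k, fk k xs) := by
    rw [← Finset.mul_sum]
    congr 1
    rw [Finset.sum_sub_distrib, Finset.sum_sub_distrib, ← sum_inner, hsum0]
    simp
  rw [hrhs] at hsum
  have hm0 : (0:ℝ) ≤ 1 / m := by positivity
  have := mul_le_mul_of_nonneg_left hsum hm0
  calc (1 / m : ℝ) * ∑ k, ‖gk k z - gk k xs‖ ^ 2
      ≤ (1 / m : ℝ) * (2 * L * (∑ k, fk k z - ∑ k, fk k xs)) := this
    _ = 2 * L * ((1 / m : ℝ) * ∑ k, fk k z - (1 / m : ℝ) * ∑ k, fk k xs) := by ring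

end aux

/-- Variance bound for the SVRG-type estimator `G(x,y,ξ) = ∇f_ξ(x) − ∇f_ξ(y) + ∇f(y)`
with `ξ` uniform on `{1,…,m}`:
`E_ξ‖G − ∇f(x)‖² ≤ 2E_ξ‖∇f_ξ(x) − ∇f_ξ(x*)‖² + 2E_ξ‖∇f_ξ(y) − ∇f_ξ(x*) − (∇f(y) − ∇f(x*))‖²`
`≤ 4L(f(x) − f(x*)) + 4L(f(y) − f(x*))`. -/

theorem stmt_17 (d m : ℕ) (hm : 0 < m)
    (fk : Fin m → EuclideanSpace ℝ (Fin d) → ℝ)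
    (gk : Fin m → EuclideanSpace ℝ (Fin d) → EuclideanSpace ℝ (Fin d))
    (L : ℝ) (hL : 0 < L)
    (hconv : ∀ k, ConvexOn ℝ Set.univ (fk k))
    (hgrad : ∀ k x, HasGradientAt (fk k) (gk k x) x)
    (hlip : ∀ k x y, ‖gk k x - gk k y‖ ≤ L * ‖x - y‖)
    (f : EuclideanSpace ℝ (Fin d) → ℝ)
    (hf : ∀ x, f x = (1 / m : ℝ) * ∑ k, fk k x)
    (Gf : EuclideanSpace ℝ (Fin d) → EuclideanSpace ℝ (Fin d))
    (hGf : ∀ x, Gf x = (1 / m : ℝ) • ∑ k, gk k x)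
    (xs : EuclideanSpace ℝ (Fin d)) (hmin : ∀ z, f xs ≤ f z)
    (hgrad0 : Gf xs = 0)
    (x y : EuclideanSpace ℝ (Fin d)) :
    (1 / m : ℝ) * ∑ k, ‖(gk k x - gk k y + Gf y) - Gf x‖ ^ 2 ≤
        2 * ((1 / m : ℝ) * ∑ k, ‖gk k x - gk k xs‖ ^ 2) +
          2 * ((1 / m : ℝ) * ∑ k, ‖gk k y - gk k xs - (Gf y - Gf xs)‖ ^ 2) ∧
      2 * ((1 / m : ℝ) * ∑ k, ‖gk k x - gk k xs‖ ^ 2) +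
          2 * ((1 / m : ℝ) * ∑ k, ‖gk k y - gk k xs - (Gf y - Gf xs)‖ ^ 2) ≤
        4 * L * (f x - f xs) + 4 * L * (f y - f xs) := by
  have hm0 : (0:ℝ) ≤ 1 / m := by positivity
  have hmne : (m : ℝ) ≠ 0 := Nat.cast_ne_zero.2 hm.ne'
  -- sum of gradients at xs is zero
  have hsum0 : ∑ k, gk k xs = 0 := by
    have h := hgrad0
    rw [hGf] at h
    rcases smul_eq_zero.1 h with h' | h'
    · exact absurd h' (by positivity : (1 / m : ℝ) ≠ 0).elim
    · exact h'
  -- means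
  have hmean : ∀ z : EuclideanSpace ℝ (Fin d),
      Gf z - Gf xs = (m : ℝ)⁻¹ • ∑ k, (gk k z - gk k xs) := by
    intro z
    rw [hGf, hGf, ← smul_sub, ← Finset.sum_sub_distrib, one_div]
  -- variance bounds
  have hvarx : ∑ k, ‖gk k x - gk k xs - (Gf x - Gf xs)‖ ^ 2 ≤
      ∑ k, ‖gk k x - gk k xs‖ ^ 2 :=
    variance_le _ _ (hmean x) hm
  have hvary : ∑ k, ‖gk k y - gk k xs - (Gf y - Gf xs)‖ ^ 2 ≤
      ∑ k, ‖gk k y - gk k xs‖ ^ 2 :=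
    variance_le _ _ (hmean y) hm
  -- averaged cocoercivity
  have hax : (1 / m : ℝ) * ∑ k, ‖gk k x - gk k xs‖ ^ 2 ≤ 2 * L * (f x - f xs) := by
    have := avg_coco hm fk gk L hL hconv hgrad hlip xs hsum0 x
    rwa [← hf, ← hf] at this
  have hay : (1 / m : ℝ) * ∑ k, ‖gk k y - gk k xs‖ ^ 2 ≤ 2 * L * (f y - f xs) := by
    have := avg_coco hm fk gk L hL hconv hgrad hlip xs hsum0 y
    rwa [← hf, ← hf] at this
  constructor
  · -- first inequality
    have hpt : ∀ k : Fin m, ‖(gk k x - gk k y + Gf y) - Gf x‖ ^ 2 ≤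
        2 * ‖gk k x - gk k xs - (Gf x - Gf xs)‖ ^ 2 +
          2 * ‖gk k y - gk k xs - (Gf y - Gf xs)‖ ^ 2 := by
      intro k
      have heq : (gk k x - gk k y + Gf y) - Gf x =
          (gk k x - gk k xs - (Gf x - Gf xs)) - (gk k y - gk k xs - (Gf y - Gf xs)) := by
        abel
      rw [heq]
      exact sq_norm_sub_le_two _ _
    have hsum := Finset.sum_le_sum (fun k (_ : k ∈ Finset.univ) => hpt k)
    have h1 := mul_le_mul_of_nonneg_left hsum hm0
    have h2 : (1 / m : ℝ) * ∑ k, (2 * ‖gk k x - gk k xs - (Gf x - Gf xs)‖ ^ 2 +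
          2 * ‖gk k y - gk k xs - (Gf y - Gf xs)‖ ^ 2) =
        2 * ((1 / m : ℝ) * ∑ k, ‖gk k x - gk k xs - (Gf x - Gf xs)‖ ^ 2) +
          2 * ((1 / m : ℝ) * ∑ k, ‖gk k y - gk k xs - (Gf y - Gf xs)‖ ^ 2) := by
      rw [Finset.sum_add_distrib, ← Finset.mul_sum, ← Finset.mul_sum]
      ring
    rw [h2] at h1
    have h3 := mul_le_mul_of_nonneg_left hvarx hm0
    linarith
  · -- second inequality
    have h4 := mul_le_mul_of_nonneg_left hvary hm0
    linarith
end
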